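/- Let G be a nontrivial strongly connected edge-weighted graph with N nodes whose edge weights are all integers, and assume G contains a nonempty closed path having no critical node (so that ρ_nc(G) ∈ ℝ). Let N_nc be the number of non-critical nodes of G. Then ρ(G) − ρ_nc(G) ≥ 1/((N − N_nc)·N_nc) ≥ 4/N². -/

import Mathlib

namespace Transients

variable {V : Type*}

/-- A walk of length `n` in the graph with edge relation `E`, given by its node
sequence `p 0, p 1, …, p n`. -/
def IsWalk (E : V → V → Prop) (n : ℕ) (p : ℕ → V) : Prop :=
  ∀ k, k < n → E (p k) (p (k + 1))

/-- A closed walk: start node equals end node. -/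
def IsClosedWalk (E : V → V → Prop) (n : ℕ) (p : ℕ → V) : Prop :=
  IsWalk E n p ∧ p 0 = p n

/-- A nonempty elementary closed walk: closed, and no node repeats except start = end. -/
def IsElemClosedWalk (E : V → V → Prop) (n : ℕ) (p : ℕ → V) : Prop :=
  0 < n ∧ IsClosedWalk E n p ∧ ∀ k l, k < n → l < n → p k = p l → k = l

/-- A simple walk: no node is visited twice. -/
def IsSimpleWalk (E : V → V → Prop) (n : ℕ) (p : ℕ → V) : Prop :=
  IsWalk E n p ∧ ∀ k l, k ≤ n → l ≤ n → p k = p l → k = l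

def StronglyConnected (E : V → V → Prop) : Prop :=
  ∀ i j : V, ∃ n p, IsWalk E n p ∧ p 0 = i ∧ p n = j

def NontrivialGraph (E : V → V → Prop) : Prop := ∃ i j, E i j

/-- The weight `w_*` of a walk in an edge-weighted graph. -/
noncomputable def walkWeight (w : V → V → ℝ) (n : ℕ) (p : ℕ → V) : ℝ :=
  ∑ k ∈ Finset.range n, w (p k) (p (k + 1))

/-- The rate ρ(G): supremum of `w_*(γ)/ℓ(γ)` over nonempty closed walks γ. -/
noncomputable def rate (E : V → V → Prop) (w : V → V → ℝ) : ℝ :=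
  sSup {x : ℝ | ∃ n p, 0 < n ∧ IsClosedWalk E n p ∧ x = walkWeight w n p / n}

/-- A critical closed walk: nonempty, closed, and its weight is ρ(G) times its length. -/
def IsCriticalWalk (E : V → V → Prop) (w : V → V → ℝ) (n : ℕ) (p : ℕ → V) : Prop :=
  0 < n ∧ IsClosedWalk E n p ∧ walkWeight w n p = rate E w * n

/-- A critical node: lies on some critical closed walk. -/
def CriticalNode (E : V → V → Prop) (w : V → V → ℝ) (i : V) : Prop :=
  ∃ n p k, IsCriticalWalk E w n p ∧ k ≤ n ∧ p k = i

/-- A critical edge: lies on some critical closed walk. -/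
def CriticalEdge (E : V → V → Prop) (w : V → V → ℝ) (i j : V) : Prop :=
  ∃ n p k, IsCriticalWalk E w n p ∧ k < n ∧ p k = i ∧ p (k + 1) = j

/-- The non-critical rate ρ_nc(G): supremum of mean weights of nonempty closed walks
containing no critical node. -/
noncomputable def ncRate (E : V → V → Prop) (w : V → V → ℝ) : ℝ :=
  sSup {x : ℝ | ∃ n p, 0 < n ∧ IsClosedWalk E n p ∧
    (∀ k, k ≤ n → ¬ CriticalNode E w (p k)) ∧ x = walkWeight w n p / n}

/-- Δ(G), the maximum edge weight. -/
noncomputable def maxWeight (E : V → V → Prop) (w : V → V → ℝ) : ℝ :=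
  sSup {x : ℝ | ∃ i j, E i j ∧ x = w i j}

/-- δ(G), the minimum edge weight. -/
noncomputable def minWeight (E : V → V → Prop) (w : V → V → ℝ) : ℝ :=
  sInf {x : ℝ | ∃ i j, E i j ∧ x = w i j}

open Classical in
/-- Δ_nc(G), the maximum weight of an edge joining two non-critical nodes
(ρ(G) if there is no such edge). -/
noncomputable def maxNcWeight (E : V → V → Prop) (w : V → V → ℝ) : ℝ :=
  if (∃ i j, E i j ∧ ¬ CriticalNode E w i ∧ ¬ CriticalNode E w j) then
    sSup {x : ℝ | ∃ i j, E i j ∧ ¬ CriticalNode E w i ∧ ¬ CriticalNode E w j ∧ x = w i j}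
  else rate E w

/-- `d` is the greatest common divisor of the set `S` of naturals. -/
def IsGcdOf (d : ℕ) (S : Set ℕ) : Prop :=
  (∀ s ∈ S, d ∣ s) ∧ ∀ e : ℕ, (∀ s ∈ S, e ∣ s) → e ∣ d

/-- The set of lengths of nonempty closed walks in the graph. -/
def ClosedLengths (E : V → V → Prop) : Set ℕ :=
  {n | 0 < n ∧ ∃ p, IsClosedWalk E n p}

/-- The set of lengths of nonempty closed walks starting at `i`. -/
def ClosedLengthsAt (E : V → V → Prop) (i : V) : Set ℕ :=
  {n | 0 < n ∧ ∃ p, IsWalk E n p ∧ p 0 = i ∧ p n = i}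

/-- There is a (possibly empty) closed walk of length `n` starting at `i`. -/
def HasClosedWalkAt (E : V → V → Prop) (i : V) (n : ℕ) : Prop :=
  ∃ p, IsWalk E n p ∧ p 0 = i ∧ p n = i

/-- cd(G), the cab driver's diameter: the maximum length of simple walks. -/
noncomputable def cabDiameter (E : V → V → Prop) : ℕ :=
  sSup {n | ∃ p, IsSimpleWalk E n p}

/-- cr(G), the circumference: the maximum length of nonempty elementary closed walks. -/
noncomputable def circumference (E : V → V → Prop) : ℕ :=
  sSup {n | ∃ p, IsElemClosedWalk E n p}

/-- `g` is the girth of the graph: the minimum length of nonempty elementary closed walks. -/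
def IsGirth (E : V → V → Prop) (g : ℕ) : Prop :=
  IsLeast {n | ∃ p, IsElemClosedWalk E n p} g

/-- `ep` is the exploration penalty of a graph of cyclicity `c`: the least `m` such that
for every node `i` and every multiple `n` of `c` with `n ≥ m` there is a closed walk
of length `n` starting at `i`. -/
def IsEp (E : V → V → Prop) (c ep : ℕ) : Prop :=
  IsLeast {m | ∀ i : V, ∀ n : ℕ, c ∣ n → m ≤ n → HasClosedWalkAt E i n} ep

/-- `i` and `j` lie in the same strongly connected component of the graph. -/
def SameComp (E : V → V → Prop) (i j : V) : Prop :=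
  (∃ n p, IsWalk E n p ∧ p 0 = i ∧ p n = j) ∧ (∃ n p, IsWalk E n p ∧ p 0 = j ∧ p n = i)

/-- `m` is the exploration penalty of the strongly connected component of `k`
(a component of cyclicity `c`). -/
def IsCompEp (E : V → V → Prop) (k : V) (c m : ℕ) : Prop :=
  IsLeast {m' | ∀ i : V, SameComp E k i → ∀ n : ℕ, c ∣ n → m' ≤ n → HasClosedWalkAt E i n} m

/-- Max-plus matrix product. -/
noncomputable def mpMul {N : ℕ} (A B : Matrix (Fin N) (Fin N) (WithBot ℝ)) :
    Matrix (Fin N) (Fin N) (WithBot ℝ) :=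
  fun i j => Finset.univ.sup fun k => A i k + B k j

/-- Max-plus matrix power, `A^{⊗n}`. -/
noncomputable def mpPow {N : ℕ} (A : Matrix (Fin N) (Fin N) (WithBot ℝ)) :
    ℕ → Matrix (Fin N) (Fin N) (WithBot ℝ)
  | 0 => fun i j => if i = j then (0 : WithBot ℝ) else ⊥
  | n + 1 => mpMul A (mpPow A n)

/-- Max-plus matrix-vector product. -/
noncomputable def mpVec {N : ℕ} (A : Matrix (Fin N) (Fin N) (WithBot ℝ))
    (v : Fin N → WithBot ℝ) : Fin N → WithBot ℝ :=
  fun i => Finset.univ.sup fun j => A i j + v j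

/-- The edge relation of the weighted graph `G(A)`. -/
def mEdge {N : ℕ} (A : Matrix (Fin N) (Fin N) (WithBot ℝ)) : Fin N → Fin N → Prop :=
  fun i j => A i j ≠ ⊥

/-- The edge weights of the weighted graph `G(A)`. -/
noncomputable def mWeight {N : ℕ} (A : Matrix (Fin N) (Fin N) (WithBot ℝ)) :
    Fin N → Fin N → ℝ :=
  fun i j => WithBot.unbotD 0 (A i j)

/-- `A` is irreducible: `G(A)` is strongly connected and has at least one edge. -/
def MPIrreducible {N : ℕ} (A : Matrix (Fin N) (Fin N) (WithBot ℝ)) : Prop :=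
  StronglyConnected (mEdge A) ∧ NontrivialGraph (mEdge A)

/-- The linear max-plus system `x(n) = A^{⊗n} ⊗ v`. -/
noncomputable def mpSystem {N : ℕ} (A : Matrix (Fin N) (Fin N) (WithBot ℝ)) (v : Fin N → ℝ)
    (n : ℕ) : Fin N → WithBot ℝ :=
  mpVec (mpPow A n) fun j => (v j : WithBot ℝ)

/-- The set of indices from which the system `x_{A,v}` is periodic with increment
`p·ρ(A)`; its least element is the transient `n_{A,v}`. -/
noncomputable def SysTransientSet {N : ℕ} (A : Matrix (Fin N) (Fin N) (WithBot ℝ))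
    (v : Fin N → ℝ) : Set ℕ :=
  {n₀ | ∃ p : ℕ, 0 < p ∧ ∀ n, n₀ ≤ n → ∀ i,
    mpSystem A v (n + p) i
      = mpSystem A v n i + ((p * rate (mEdge A) (mWeight A) : ℝ) : WithBot ℝ)}

/-- The set of indices from which the powers of `A` are periodic with increment
`p·ρ(A)`; its least element is the transient `n_A`. -/
noncomputable def MatTransientSet {N : ℕ} (A : Matrix (Fin N) (Fin N) (WithBot ℝ)) : Set ℕ :=
  {n₀ | ∃ p : ℕ, 0 < p ∧ ∀ n, n₀ ≤ n → ∀ i j,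
    mpPow A (n + p) i j
      = mpPow A n i j + ((p * rate (mEdge A) (mWeight A) : ℝ) : WithBot ℝ)}

/-- `‖v‖ = max_i v_i − min_i v_i`. -/
noncomputable def vnorm {N : ℕ} (v : Fin N → ℝ) : ℝ :=
  sSup (Set.range v) - sInf (Set.range v)

/-! Splitting a closed walk at a repeated node gives two shorter closed walks, one of which has
mean weight at least that of the whole walk. Hence `ρ` and `ρ_nc` are attained by elementary
cycles: a critical one, of length `a ≤ N - N_nc`, and one on non-critical nodes, of length
`b ≤ N_nc`. With integer weights the two means are fractions `A / a > B / b`, so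
`ρ - ρ_nc = (A b - B a) / (a b) ≥ 1 / (a b)`. The bound `4 / N²` is AM-GM. -/

section Walks

variable {E : V → V → Prop} {w : V → V → ℝ}

theorem IsWalk.congr {n : ℕ} {p q : ℕ → V} (hp : IsWalk E n p) (h : ∀ t, t ≤ n → p t = q t) :
    IsWalk E n q := fun t ht => h t ht.le ▸ h (t + 1) ht ▸ hp t ht

theorem walkWeight_congr {n : ℕ} {p q : ℕ → V} (h : ∀ t, t ≤ n → p t = q t) :
    walkWeight w n p = walkWeight w n q :=
  Finset.sum_congr rfl fun t ht => by
    have ht := Finset.mem_range.mp ht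
    rw [h t ht.le, h (t + 1) ht]

theorem isWalk_add_iff {m n : ℕ} {p : ℕ → V} :
    IsWalk E (m + n) p ↔ IsWalk E m p ∧ IsWalk E n (fun t => p (m + t)) := by
  refine ⟨fun h => ⟨fun t ht => h t (by omega), fun t ht => h (m + t) (by omega)⟩,
    fun ⟨h₁, h₂⟩ t ht => ?_⟩
  by_cases htm : t < m
  · exact h₁ t htm
  · obtain ⟨s, rfl⟩ := Nat.exists_eq_add_of_le (not_lt.mp htm)
    exact h₂ s (by omega)

theorem walkWeight_add (m n : ℕ) (p : ℕ → V) :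
    walkWeight w (m + n) p = walkWeight w m p + walkWeight w n (fun t => p (m + t)) :=
  Finset.sum_range_add _ m n

theorem walkWeight_eq_intCast (hint : ∀ i j, E i j → ∃ z : ℤ, w i j = z) {n : ℕ} {p : ℕ → V}
    (hp : IsWalk E n p) : ∃ z : ℤ, walkWeight w n p = z :=
  Finset.sum_induction _ (fun x : ℝ => ∃ z : ℤ, x = z)
    (fun _ _ ⟨a, ha⟩ ⟨b, hb⟩ => ⟨a + b, by rw [ha, hb]; push_cast; rfl⟩) ⟨0, by simp⟩
    fun t ht => hint _ _ (hp t (Finset.mem_range.mp ht))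

theorem IsElemClosedWalk.length_le_ncard {n : ℕ} {p : ℕ → V} (hp : IsElemClosedWalk E n p)
    {S : Set V} (hS : S.Finite) (hpS : ∀ t, t < n → p t ∈ S) : n ≤ S.ncard := by
  simpa using Set.ncard_le_ncard_of_injOn p (s := Set.Iio n) (fun t ht => hpS t ht)
    (fun s hs t ht hst => hp.2.2 s t hs ht hst) hS

end Walks

/-- When `p k = p (k + m)`, the walk `p` with its closed subwalk from step `k` to step `k + m`
removed. -/
def cutLoop (p : ℕ → V) (k m : ℕ) : ℕ → V :=
  fun t => if t ≤ k then p t else p (t + m)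

section CutLoop

variable {E : V → V → Prop} {w : V → V → ℝ} {p : ℕ → V} {k m r : ℕ}

theorem cutLoop_shift (hk : p k = p (k + m)) :
    (fun t => cutLoop p k m (k + t)) = fun t => p (k + m + t) := by
  funext t
  rcases Nat.eq_zero_or_pos t with rfl | ht
  · simp [cutLoop, hk]
  · simp only [cutLoop, if_neg (show ¬ k + t ≤ k by omega)]
    congr 1
    ring

theorem cutLoop_eq_of_le {t : ℕ} (ht : t ≤ k) : cutLoop p k m t = p t := if_pos ht

theorem IsClosedWalk.loop (hp : IsClosedWalk E (k + m + r) p) (hk : p k = p (k + m)) :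
    IsClosedWalk E m (fun t => p (k + t)) :=
  ⟨(isWalk_add_iff.mp (isWalk_add_iff.mp hp.1).1).2, by simpa using hk⟩

theorem IsClosedWalk.cutLoop (hp : IsClosedWalk E (k + m + r) p) (hk : p k = p (k + m)) :
    IsClosedWalk E (k + r) (cutLoop p k m) := by
  obtain ⟨⟨hkm, hr⟩, hclosed⟩ :=
    And.imp_left isWalk_add_iff.mp (isWalk_add_iff.mp hp.1), hp.2
  refine ⟨isWalk_add_iff.mpr ⟨?_, cutLoop_shift hk ▸ hr⟩, ?_⟩
  · exact hkm.1.congr fun t ht => (cutLoop_eq_of_le ht).symm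
  · rw [cutLoop_eq_of_le (Nat.zero_le k), hclosed]
    exact (congrFun (cutLoop_shift hk) r).symm

theorem walkWeight_eq_loop_add_cutLoop (hk : p k = p (k + m)) :
    walkWeight w (k + m + r) p =
      walkWeight w m (fun t => p (k + t)) + walkWeight w (k + r) (cutLoop p k m) := by
  rw [walkWeight_add, walkWeight_add, walkWeight_add k r, cutLoop_shift hk,
    walkWeight_congr (p := cutLoop p k m) (q := p) fun t ht => cutLoop_eq_of_le ht]
  ring

end CutLoop

theorem add_div_add_le_max_div_div {K : Type*} [Field K] [LinearOrder K] [IsStrictOrderedRing K]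
    {a b c d : K} (hc : 0 < c) (hd : 0 < d) : (a + b) / (c + d) ≤ max (a / c) (b / d) := by
  have hac : a ≤ max (a / c) (b / d) * c := (div_le_iff₀ hc).mp (le_max_left _ _)
  have hbd : b ≤ max (a / c) (b / d) * d := (div_le_iff₀ hd).mp (le_max_right _ _)
  rw [div_le_iff₀ (add_pos hc hd)]
  linarith

section ElementaryWalks

variable {E : V → V → Prop} {w : V → V → ℝ}

theorem exists_shorter_closedWalk_of_not_elem {n : ℕ} {p : ℕ → V} (hn : 0 < n)
    (hp : IsClosedWalk E n p) (hne : ¬ IsElemClosedWalk E n p) {S : Set V}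
    (hS : ∀ t, t ≤ n → p t ∈ S) :
    ∃ m q, 0 < m ∧ m < n ∧ IsClosedWalk E m q ∧ (∀ t, t ≤ m → q t ∈ S) ∧
      walkWeight w n p / n ≤ walkWeight w m q / m := by
  obtain ⟨k, l, hkl, hln, hk⟩ : ∃ k l, k < l ∧ l < n ∧ p k = p l := by
    simp only [IsElemClosedWalk, hn, hp, true_and, not_forall] at hne
    obtain ⟨k, l, hk, hl, hkl, hne⟩ := hne
    rcases lt_or_gt_of_ne hne with h | h
    exacts [⟨k, l, h, hl, hkl⟩, ⟨l, k, h, hk, hkl.symm⟩]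
  obtain ⟨m, rfl⟩ := Nat.exists_eq_add_of_le hkl.le
  obtain ⟨r, rfl⟩ := Nat.exists_eq_add_of_le hln.le
  have hm : (0 : ℝ) < m := by exact_mod_cast (show 0 < m by omega)
  have hkr : (0 : ℝ) < ↑(k + r) := by exact_mod_cast (show 0 < k + r by omega)
  have hmean : walkWeight w (k + m + r) p / ↑(k + m + r) ≤
      max (walkWeight w m (fun t => p (k + t)) / m)
        (walkWeight w (k + r) (cutLoop p k m) / ↑(k + r)) := by
    rw [walkWeight_eq_loop_add_cutLoop hk, show k + m + r = m + (k + r) by ring, Nat.cast_add]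
    exact add_div_add_le_max_div_div hm hkr
  rcases le_max_iff.mp hmean with h | h
  · exact ⟨m, _, by omega, by omega, hp.loop hk, fun t ht => hS _ (by omega), h⟩
  · refine ⟨k + r, _, by omega, by omega, hp.cutLoop hk, fun t ht => ?_, h⟩
    unfold cutLoop
    split_ifs <;> exact hS _ (by omega)

theorem exists_elemClosedWalk_mean_ge {S : Set V} {n : ℕ} {p : ℕ → V} (hn : 0 < n)
    (hp : IsClosedWalk E n p) (hS : ∀ t, t ≤ n → p t ∈ S) :
    ∃ m q, IsElemClosedWalk E m q ∧ (∀ t, t ≤ m → q t ∈ S) ∧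
      walkWeight w n p / n ≤ walkWeight w m q / m := by
  induction n using Nat.strong_induction_on generalizing p with
  | _ n ih =>
    by_cases he : IsElemClosedWalk E n p
    · exact ⟨n, p, he, hS, le_rfl⟩
    obtain ⟨m, q, hm, hmn, hq, hqS, hpq⟩ :=
      exists_shorter_closedWalk_of_not_elem (w := w) hn hp he hS
    obtain ⟨m', q', he', hq'S, hqq'⟩ := ih m hmn hm hq hqS
    exact ⟨m', q', he', hq'S, hpq.trans hqq'⟩

theorem finite_elemMeans [Finite V] :
    {x : ℝ | ∃ n p, IsElemClosedWalk E n p ∧ x = walkWeight w n p / n}.Finite := by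
  set N := Nat.card V
  let mean : Fin (N + 1) × (Fin (N + 1) → V) → ℝ := fun nf =>
    walkWeight w nf.1 (fun t => nf.2 (Fin.ofNat _ t)) / nf.1
  refine (Set.finite_range mean).subset ?_
  rintro x ⟨n, p, hp, rfl⟩
  have hnN : n ≤ N := by
    simpa [N] using hp.length_le_ncard Set.finite_univ fun t _ => Set.mem_univ (p t)
  refine ⟨(⟨n, by omega⟩, fun i => p i), ?_⟩
  simp only [mean]
  congr 1
  exact walkWeight_congr fun t ht => by simp [Nat.mod_eq_of_lt (by omega : t < N + 1)]

end ElementaryWalks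

def closedMeans (E : V → V → Prop) (w : V → V → ℝ) (S : Set V) : Set ℝ :=
  {x | ∃ n p, 0 < n ∧ IsClosedWalk E n p ∧ (∀ k, k ≤ n → p k ∈ S) ∧ x = walkWeight w n p / n}

section Rates

variable {E : V → V → Prop} {w : V → V → ℝ}

theorem rate_eq_sSup_closedMeans_univ : rate E w = sSup (closedMeans E w Set.univ) := by
  simp [rate, closedMeans]

theorem ncRate_eq_sSup_closedMeans :
    ncRate E w = sSup (closedMeans E w {i | ¬ CriticalNode E w i}) := rfl

theorem exists_elem_isGreatest_closedMeans [Finite V] {S : Set V}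
    (hS : ∃ n p, 0 < n ∧ IsClosedWalk E n p ∧ ∀ k, k ≤ n → p k ∈ S) :
    ∃ n p, IsElemClosedWalk E n p ∧ (∀ k, k ≤ n → p k ∈ S) ∧
      IsGreatest (closedMeans E w S) (walkWeight w n p / n) := by
  set T := {x : ℝ | ∃ n p, IsElemClosedWalk E n p ∧ (∀ k, k ≤ n → p k ∈ S) ∧
    x = walkWeight w n p / n}
  have hT : T.Finite :=
    finite_elemMeans.subset fun _ ⟨n, p, hp, _, hx⟩ => ⟨n, p, hp, hx⟩
  have hTne : T.Nonempty := by
    obtain ⟨n, p, hn, hp, hpS⟩ := hS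
    obtain ⟨m, q, hq, hqS, -⟩ := exists_elemClosedWalk_mean_ge (w := w) hn hp hpS
    exact ⟨_, m, q, hq, hqS, rfl⟩
  obtain ⟨_, ⟨n, p, hp, hpS, rfl⟩, hmax⟩ := Set.exists_max_image T id hT hTne
  refine ⟨n, p, hp, hpS, ⟨n, p, hp.1, hp.2.1, hpS, rfl⟩, ?_⟩
  rintro _ ⟨m, q, hm, hq, hqS, rfl⟩
  obtain ⟨m', q', hq', hq'S, hle⟩ := exists_elemClosedWalk_mean_ge hm hq hqS
  exact hle.trans (hmax _ ⟨m', q', hq', hq'S, rfl⟩)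

theorem criticalNode_of_mean_eq_rate {n : ℕ} {p : ℕ → V} (hn : 0 < n) (hp : IsClosedWalk E n p)
    (h : walkWeight w n p / n = rate E w) {k : ℕ} (hk : k ≤ n) : CriticalNode E w (p k) :=
  ⟨n, p, k, ⟨hn, hp, by rw [← h, div_mul_cancel₀ _ (by positivity)]⟩, hk, rfl⟩

theorem mean_lt_rate_of_not_criticalNode {n : ℕ} {p : ℕ → V} (hn : 0 < n)
    (hp : IsClosedWalk E n p) (hle : walkWeight w n p / n ≤ rate E w) {k : ℕ} (hk : k ≤ n)
    (hpk : ¬ CriticalNode E w (p k)) : walkWeight w n p / n < rate E w :=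
  hle.lt_of_ne fun h => hpk (criticalNode_of_mean_eq_rate hn hp h hk)

end Rates

theorem one_div_mul_le_sub_of_lt {A B : ℤ} {a b : ℕ} (ha : 0 < a) (hb : 0 < b)
    (h : (B : ℝ) / b < A / a) : 1 / ((a : ℝ) * b) ≤ A / a - B / b := by
  have ha' : (0 : ℝ) < a := by exact_mod_cast ha
  have hb' : (0 : ℝ) < b := by exact_mod_cast hb
  rw [div_lt_div_iff₀ hb' ha'] at h
  have hint : B * a + 1 ≤ A * b := by exact_mod_cast h
  have hreal : (B : ℝ) * a + 1 ≤ A * b := by exact_mod_cast hint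
  rw [div_sub_div _ _ ha'.ne' hb'.ne', mul_comm (a : ℝ) b]
  gcongr
  linarith

theorem four_div_sq_le_one_div_mul {x y : ℝ} (hx : 0 < x) (hy : 0 < y) :
    4 / (x + y) ^ 2 ≤ 1 / (x * y) := by
  rw [div_le_div_iff₀ (by positivity) (by positivity)]
  nlinarith [sq_nonneg (x - y)]

theorem stmt_19_general {V : Type*} [Fintype V] (E : V → V → Prop) (wE : V → V → ℝ)
    (hint : ∀ i j : V, E i j → ∃ z : ℤ, wE i j = (z : ℝ))
    (hnc : ∃ n p, 0 < n ∧ IsClosedWalk E n p ∧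
      ∀ k, k ≤ n → ¬ CriticalNode E wE (p k)) :
    1 / (((Fintype.card V : ℝ) - ({i : V | ¬ CriticalNode E wE i}.ncard : ℝ)) *
        ({i : V | ¬ CriticalNode E wE i}.ncard : ℝ)) ≤ rate E wE - ncRate E wE ∧
    4 / (Fintype.card V : ℝ) ^ 2 ≤
      1 / (((Fintype.card V : ℝ) - ({i : V | ¬ CriticalNode E wE i}.ncard : ℝ)) *
        ({i : V | ¬ CriticalNode E wE i}.ncard : ℝ)) := by
  set C := {i : V | CriticalNode E wE i}
  set NC := {i : V | ¬ CriticalNode E wE i}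
  obtain ⟨n, p, hn, hp, hpNC⟩ := hnc
  obtain ⟨a, pa, hpa, -, hmaxa⟩ := exists_elem_isGreatest_closedMeans (w := wE) (S := Set.univ)
    ⟨n, p, hn, hp, fun _ _ => Set.mem_univ _⟩
  obtain ⟨b, pb, hpb, hpbNC, hmaxb⟩ := exists_elem_isGreatest_closedMeans (w := wE) (S := NC)
    ⟨n, p, hn, hp, hpNC⟩
  have hrate : rate E wE = walkWeight wE a pa / a :=
    rate_eq_sSup_closedMeans_univ.trans hmaxa.csSup_eq
  have hncRate : ncRate E wE = walkWeight wE b pb / b :=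
    ncRate_eq_sSup_closedMeans.trans hmaxb.csSup_eq
  have ha : a ≤ C.ncard := hpa.length_le_ncard (Set.toFinite _) fun t ht =>
    criticalNode_of_mean_eq_rate hpa.1 hpa.2.1 hrate.symm ht.le
  have hb : b ≤ NC.ncard := hpb.length_le_ncard (Set.toFinite _) fun t ht => hpbNC t ht.le
  have hlt : walkWeight wE b pb / b < walkWeight wE a pa / a := hrate ▸
    mean_lt_rate_of_not_criticalNode hpb.1 hpb.2.1
      (hrate ▸ hmaxa.2 ⟨b, pb, hpb.1, hpb.2.1, fun _ _ => Set.mem_univ _, rfl⟩)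
      (Nat.zero_le b) (hpbNC 0 (Nat.zero_le b))
  obtain ⟨A, hA⟩ := walkWeight_eq_intCast hint hpa.2.1.1
  obtain ⟨B, hB⟩ := walkWeight_eq_intCast hint hpb.2.1.1
  have hcard : C.ncard + NC.ncard = Fintype.card V := by
    rw [← Nat.card_eq_fintype_card, ← Set.ncard_add_ncard_compl C]
    rfl
  rw [← hcard, Nat.cast_add, add_sub_cancel_right, hrate, hncRate]
  have hC : (0 : ℝ) < C.ncard := by exact_mod_cast hpa.1.trans_le ha
  have hNC : (0 : ℝ) < NC.ncard := by exact_mod_cast hpb.1.trans_le hb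
  refine ⟨?_, four_div_sq_le_one_div_mul hC hNC⟩
  have hab : (0 : ℝ) < a * b := by exact_mod_cast Nat.mul_pos hpa.1 hpb.1
  calc 1 / ((C.ncard : ℝ) * NC.ncard) ≤ 1 / ((a : ℝ) * b) := by gcongr
    _ ≤ _ := by
      rw [hA, hB] at hlt ⊢
      exact one_div_mul_le_sub_of_lt hpa.1 hpb.1 hlt

/-- For a nontrivial strongly connected edge-weighted graph with `N`
nodes, integer edge weights, and a nonempty closed path avoiding all critical nodes,
with `N_nc` the number of non-critical nodes:
`ρ(G) − ρ_nc(G) ≥ 1/((N − N_nc)·N_nc) ≥ 4/N²`. -/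
theorem stmt_19 {V : Type*} [Fintype V] (E : V → V → Prop) (wE : V → V → ℝ)
    (hnt : NontrivialGraph E) (hsc : StronglyConnected E)
    (hint : ∀ i j : V, E i j → ∃ z : ℤ, wE i j = (z : ℝ))
    (hnc : ∃ n p, 0 < n ∧ IsClosedWalk E n p ∧
      ∀ k, k ≤ n → ¬ CriticalNode E wE (p k)) :
    1 / (((Fintype.card V : ℝ) - ({i : V | ¬ CriticalNode E wE i}.ncard : ℝ)) *
        ({i : V | ¬ CriticalNode E wE i}.ncard : ℝ)) ≤ rate E wE - ncRate E wE ∧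
    4 / (Fintype.card V : ℝ) ^ 2 ≤
      1 / (((Fintype.card V : ℝ) - ({i : V | ¬ CriticalNode E wE i}.ncard : ℝ)) *
        ({i : V | ¬ CriticalNode E wE i}.ncard : ℝ)) :=
  stmt_19_general E wE hint hnc

end Transients
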